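/- Let Δ ⊃ Δ' be two simplicial complexes on [m]. Then x ∈ r(A_{Δ'}) if and only if x ∈ r(A_Δ) and ∂_E x = 0 for all E ∈ Δ ∖ Δ'. -/

import Mathlib

open Finset

namespace Hier

variable {m : ℕ}

abbrev Cell (I : Fin m → ℕ) := ∀ j, Fin (I j)

variable (I : Fin m → ℕ)

/-- standard inner product on ℚ^I -/
def dot (x y : Cell I → ℚ) : ℚ := ∑ i, x i * y i

/-- L_E: tables depending only on the coordinates in E -/
def LL (E : Finset (Fin m)) : Submodule ℚ (Cell I → ℚ) where
  carrier := {x | ∀ i i' : Cell I, (∀ j ∈ E, i j = i' j) → x i = x i'}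
  zero_mem' := by intro i i' _; rfl
  add_mem' := by
    intro a b ha hb i i' h
    simp only [Pi.add_apply, ha i i' h, hb i i' h]
  smul_mem' := by
    intro c a ha i i' h
    simp only [Pi.smul_apply, ha i i' h]

/-- orthogonal complement w.r.t. the standard inner product -/
def perp (S : Submodule ℚ (Cell I → ℚ)) : Submodule ℚ (Cell I → ℚ) where
  carrier := {y | ∀ x ∈ S, dot I x y = 0}
  zero_mem' := by intro x hx; simp [dot]
  add_mem' := by
    intro a b ha hb x hx
    have h1 := ha x hx
    have h2 := hb x hx
    simp only [dot, Pi.add_apply, mul_add, Finset.sum_add_distrib] at *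
    rw [h1, h2]; ring
  smul_mem' := by
    intro c a ha x hx
    have h1 := ha x hx
    simp only [dot, Pi.smul_apply, smul_eq_mul] at *
    calc ∑ i, x i * (c * a i) = c * ∑ i, x i * a i := by
          rw [Finset.mul_sum]; congr 1; funext i; ring
      _ = 0 := by rw [h1]; ring

/-- incremental subspace N_E -/
def NN (E : Finset (Fin m)) : Submodule ℚ (Cell I → ℚ) :=
  LL I E ⊓ perp I (⨆ j ∈ E, LL I (E.erase j))

/-- F-marginal of x evaluated at the marginal cell i_F -/
def marg (x : Cell I → ℚ) (F : Finset (Fin m)) (i : Cell I) : ℚ :=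
  ∑ j : Cell I, if ∀ k ∈ F, j k = i k then x j else 0

/-- kernel of the configuration determined by a family of facets:
tables all of whose F-marginals vanish, F ∈ Fs -/
def kern (Fs : Finset (Finset (Fin m))) : Submodule ℚ (Cell I → ℚ) where
  carrier := {y | ∀ F ∈ Fs, ∀ i, marg I y F i = 0}
  zero_mem' := by intro F hF i; simp [marg]
  add_mem' := by
    intro a b ha hb F hF i
    have h1 := ha F hF i
    have h2 := hb F hF i
    simp only [marg, Pi.add_apply] at *
    have key : (∑ j : Cell I, if ∀ k ∈ F, j k = i k then a j + b j else 0)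
        = (∑ j : Cell I, if ∀ k ∈ F, j k = i k then a j else 0)
          + (∑ j : Cell I, if ∀ k ∈ F, j k = i k then b j else 0) := by
      rw [← Finset.sum_add_distrib]
      apply Finset.sum_congr rfl
      intro j _
      split <;> simp
    rw [key, h1, h2]; ring
  smul_mem' := by
    intro c a ha F hF i
    have h1 := ha F hF i
    simp only [marg, Pi.smul_apply, smul_eq_mul] at *
    calc ∑ j : Cell I, (if ∀ k ∈ F, j k = i k then c * a j else 0)
        = c * ∑ j : Cell I, (if ∀ k ∈ F, j k = i k then a j else 0) := by
          rw [Finset.mul_sum]; congr 1; funext j; split <;> simp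
      _ = 0 := by rw [h1]; ring

/-- a (finite) abstract simplicial complex on [m] -/
def IsComplex (Δ : Finset (Finset (Fin m))) : Prop :=
  ∀ F ∈ Δ, ∀ F' ⊆ F, F' ∈ Δ

/-- the maximal elements (facets) of Δ -/
def facets (Δ : Finset (Finset (Fin m))) : Finset (Finset (Fin m)) :=
  Δ.filter (fun D => ∀ F ∈ Δ, D ⊆ F → F = D)

/-- row space of the hierarchical-model configuration A_Δ -/
def rowsp (Δ : Finset (Finset (Fin m))) : Submodule ℚ (Cell I → ℚ) :=
  ⨆ D ∈ facets Δ, LL I D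

/-- single partial difference operator ∂_j -/
def pd1 (hI : ∀ j, 0 < I j) (j : Fin m) (x : Cell I → ℚ) : Cell I → ℚ :=
  fun i => x i - x (Function.update i j ⟨0, hI j⟩)

/-- ∂_E: composition of the (commuting) ∂_j, j ∈ E -/
noncomputable def pdE (hI : ∀ j, 0 < I j) (E : Finset (Fin m)) : (Cell I → ℚ) → (Cell I → ℚ) :=
  E.toList.foldr (fun j f => pd1 I hI j ∘ f) id

/-!
Let `z_j` be the operator that sets coordinate `j` to `0`. Then `∂_j = 1 - z_j` and the `z_j`
commute, so expanding `1 = ∏_j ((1 - z_j) + z_j)` gives `x = ∑_E z_{Eᶜ} (∂_E x)`, where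
`z_{Eᶜ} (∂_E x)` depends only on the coordinates in `E`. Hence `x ∈ Σ_{E ∈ Δ} L_E = r(A_Δ)` as soon
as `∂_E x = 0` for all `E ∉ Δ`. Conversely `∂_E` kills `L_D` unless `E ⊆ D`, so for a complex `Δ`
the row space `r(A_Δ)` is exactly the common kernel of the `∂_E` with `E ∉ Δ`; the theorem
compares these descriptions for `Δ` and `Δ'`.
-/

open scoped IsMulCommutative

section Operators

variable {I} (hI0 : ∀ j, 0 < I j)

def zeroAt (j : Fin m) : Module.End ℚ (Cell I → ℚ) :=
  LinearMap.funLeft ℚ ℚ fun i => Function.update i j ⟨0, hI0 j⟩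

lemma zeroAt_apply (j : Fin m) (x : Cell I → ℚ) (i : Cell I) :
    zeroAt hI0 j x i = x (Function.update i j ⟨0, hI0 j⟩) := rfl

lemma zeroAt_mul_comm (j k : Fin m) :
    zeroAt hI0 j * zeroAt hI0 k = zeroAt hI0 k * zeroAt hI0 j := by
  rcases eq_or_ne j k with rfl | h
  · rfl
  · refine LinearMap.ext fun x => funext fun i => ?_
    simp only [Module.End.mul_apply, zeroAt_apply, Function.update_comm h]

/- In this commutative subalgebra the `∂_E` become finset products `∏ j ∈ E, (1 - z_j)`. -/
def zeroAtAlg : Subalgebra ℚ (Module.End ℚ (Cell I → ℚ)) :=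
  Algebra.adjoin ℚ (Set.range (zeroAt hI0))

instance : IsMulCommutative (zeroAtAlg hI0) :=
  Algebra.isMulCommutative_adjoin ℚ <| by
    rintro _ ⟨j, rfl⟩ _ ⟨k, rfl⟩
    exact zeroAt_mul_comm hI0 j k

def zeroAtGen (j : Fin m) : zeroAtAlg hI0 :=
  ⟨zeroAt hI0 j, Algebra.subset_adjoin ⟨j, rfl⟩⟩

lemma pd1_eq_coe (j : Fin m) :
    pd1 I hI0 j = ⇑((1 - zeroAtGen hI0 j : zeroAtAlg hI0) : Module.End ℚ (Cell I → ℚ)) :=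
  rfl

lemma pdE_eq_coe_prod (E : Finset (Fin m)) :
    pdE I hI0 E =
      ⇑((∏ j ∈ E, (1 - zeroAtGen hI0 j) : zeroAtAlg hI0) : Module.End ℚ (Cell I → ℚ)) := by
  rw [← Finset.prod_map_toList, pdE]
  induction E.toList with
  | nil => rfl
  | cons j l ih =>
    rw [List.foldr_cons, ih, pd1_eq_coe, List.map_cons, List.prod_cons, Subalgebra.coe_mul,
      Module.End.coe_mul]

lemma pdE_eq_zero_of_mem_LL {D E : Finset (Fin m)} {x : Cell I → ℚ} (hx : x ∈ LL I D)
    (hE : ¬ E ⊆ D) : pdE I hI0 E x = 0 := by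
  obtain ⟨j, hjE, hjD⟩ := Finset.not_subset.mp hE
  have hx_j : pd1 I hI0 j x = 0 := funext fun i => sub_eq_zero.mpr <|
    hx _ _ fun k hk => (Function.update_of_ne (ne_of_mem_of_not_mem hk hjD) _ _).symm
  rw [pdE_eq_coe_prod, ← Finset.prod_erase_mul _ _ hjE, Subalgebra.coe_mul, Module.End.mul_apply,
    ← pd1_eq_coe, hx_j, map_zero]

lemma zeroAt_mem_LL {D : Finset (Fin m)} {x : Cell I → ℚ} (hx : x ∈ LL I D) (j : Fin m) :
    zeroAt hI0 j x ∈ LL I (D.erase j) := by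
  intro i i' h
  refine hx _ _ fun k hk => ?_
  rcases eq_or_ne k j with rfl | hne
  · simp
  · simp only [Function.update_of_ne hne, h k (Finset.mem_erase.mpr ⟨hne, hk⟩)]

lemma prod_zeroAtGen_apply_mem_LL (T : Finset (Fin m)) (x : Cell I → ℚ) :
    ((∏ j ∈ T, zeroAtGen hI0 j : zeroAtAlg hI0) : Module.End ℚ (Cell I → ℚ)) x ∈ LL I Tᶜ := by
  induction T using Finset.induction_on with
  | empty =>
    intro i i' h
    rw [funext fun j => h j (by simp)]
  | insert j T hj ih =>
    rw [Finset.prod_insert hj, Subalgebra.coe_mul, Module.End.mul_apply, Finset.compl_insert]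
    exact zeroAt_mem_LL hI0 ih j

lemma sum_prod_zeroAtGen_apply_pdE (x : Cell I → ℚ) :
    ∑ E : Finset (Fin m),
      ((∏ j ∈ Eᶜ, zeroAtGen hI0 j : zeroAtAlg hI0) : Module.End ℚ (Cell I → ℚ)) (pdE I hI0 E x)
      = x := by
  have h : ∑ E : Finset (Fin m),
      (∏ j ∈ Eᶜ, zeroAtGen hI0 j) * ∏ j ∈ E, (1 - zeroAtGen hI0 j) = 1 := by
    calc _ = ∏ j, ((1 - zeroAtGen hI0 j) + zeroAtGen hI0 j) := by
          simp only [Fintype.prod_add, mul_comm]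
      _ = 1 := Finset.prod_eq_one fun j _ => sub_add_cancel (1 : zeroAtAlg hI0) _
  conv_rhs => rw [← Module.End.one_apply (R := ℚ) x, ← Subalgebra.coe_one (zeroAtAlg hI0), ← h]
  simp only [pdE_eq_coe_prod, AddSubmonoidClass.coe_finsetSum, LinearMap.coe_sum,
    Finset.sum_apply, Subalgebra.coe_mul, Module.End.mul_apply]

end Operators

section RowSpace

variable {I}

lemma LL_mono {D F : Finset (Fin m)} (h : D ⊆ F) : LL I D ≤ LL I F :=
  fun _ hx i i' hii => hx i i' fun j hj => hii j (h hj)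

lemma exists_mem_facets_superset {Δ : Finset (Finset (Fin m))} {F : Finset (Fin m)}
    (hF : F ∈ Δ) : ∃ D ∈ facets Δ, F ⊆ D := by
  obtain ⟨D, hFD, hD⟩ := Δ.exists_le_maximal hF
  exact ⟨D, Finset.mem_filter.mpr ⟨hD.1, fun G hG hDG => (hD.eq_of_le hG hDG).symm⟩, hFD⟩

lemma LL_le_rowsp {Δ : Finset (Finset (Fin m))} {F : Finset (Fin m)} (hF : F ∈ Δ) :
    LL I F ≤ rowsp I Δ := by
  obtain ⟨D, hD, hFD⟩ := exists_mem_facets_superset hF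
  exact (LL_mono hFD).trans (le_iSup₂_of_le D hD le_rfl)

variable (hI0 : ∀ j, 0 < I j)

lemma pdE_eq_zero_of_mem_rowsp {Δ : Finset (Finset (Fin m))} (hΔ : IsComplex Δ)
    {x : Cell I → ℚ} (hx : x ∈ rowsp I Δ) {E : Finset (Fin m)} (hE : E ∉ Δ) :
    pdE I hI0 E x = 0 := by
  have hker : rowsp I Δ ≤ LinearMap.ker
      ((∏ j ∈ E, (1 - zeroAtGen hI0 j) : zeroAtAlg hI0) : Module.End ℚ (Cell I → ℚ)) :=
    iSup₂_le fun D hD y hy => by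
      rw [LinearMap.mem_ker, ← pdE_eq_coe_prod]
      exact pdE_eq_zero_of_mem_LL hI0 hy fun hED => hE (hΔ D (Finset.filter_subset _ _ hD) E hED)
  rw [pdE_eq_coe_prod]
  exact hker hx

lemma mem_rowsp_of_pdE_eq_zero {Δ : Finset (Finset (Fin m))} {x : Cell I → ℚ}
    (h : ∀ E ∉ Δ, pdE I hI0 E x = 0) : x ∈ rowsp I Δ := by
  rw [← sum_prod_zeroAtGen_apply_pdE hI0 x]
  refine Submodule.sum_mem _ fun E _ => ?_
  by_cases hE : E ∈ Δ
  · have hmem := prod_zeroAtGen_apply_mem_LL hI0 Eᶜ (pdE I hI0 E x)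
    rw [compl_compl] at hmem
    exact LL_le_rowsp hE hmem
  · rw [h E hE, map_zero]
    exact Submodule.zero_mem _

lemma mem_rowsp_iff {Δ : Finset (Finset (Fin m))} (hΔ : IsComplex Δ) {x : Cell I → ℚ} :
    x ∈ rowsp I Δ ↔ ∀ E ∉ Δ, pdE I hI0 E x = 0 :=
  ⟨fun hx _ hE => pdE_eq_zero_of_mem_rowsp hI0 hΔ hx hE, mem_rowsp_of_pdE_eq_zero hI0⟩

end RowSpace

theorem stmt13 (hI0 : ∀ j, 0 < I j)
    (Δ Δ' : Finset (Finset (Fin m))) (hΔ : IsComplex Δ) (hΔ' : IsComplex Δ')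
    (hsub : Δ' ⊆ Δ) (x : Cell I → ℚ) :
    x ∈ rowsp I Δ' ↔ (x ∈ rowsp I Δ ∧ ∀ E ∈ Δ \ Δ', pdE I hI0 E x = 0) := by
  rw [mem_rowsp_iff hI0 hΔ', mem_rowsp_iff hI0 hΔ]
  constructor
  · intro h
    exact ⟨fun E hE => h E fun hE' => hE (hsub hE'), fun E hE => h E (Finset.mem_sdiff.mp hE).2⟩
  · rintro ⟨hΔx, hΔΔ'x⟩ E hE
    by_cases hEΔ : E ∈ Δ
    · exact hΔΔ'x E (Finset.mem_sdiff.mpr ⟨hEΔ, hE⟩)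
    · exact hΔx E hEΔ

end Hier
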